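/- For all ν ≥ 1/2 and all x > 0 one has Ψ_ν²(x) + (2/x)·Ψ_ν(x) − 1 < 0, where Ψ_ν(x) = I_{ν+1}(x)/I_ν(x). -/

import Mathlib

open Real Filter Topology

/-- The modified Bessel function of the first kind of real order `ν`. -/
noncomputable def besselI (ν x : ℝ) : ℝ :=
  ∑' m : ℕ, (x / 2) ^ (2 * (m : ℝ) + ν) / ((m.factorial : ℝ) * Real.Gamma ((m : ℝ) + ν + 1))

/-- `Ψ_ν(x) = I_{ν+1}(x) / I_ν(x)`. -/
noncomputable def psi (ν x : ℝ) : ℝ := besselI (ν + 1) x / besselI ν x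

/-!
Write `I_μ(x) = (x/2)^μ G_μ(t)` with `t = x²/4` and `G_μ(t) = ∑ₘ tᵐ / (m! Γ(m+μ+1))`
(`besselSeries μ t`). The claim is then `t G_{ν+1}² < G_ν² - G_ν G_{ν+1}`, which holds
coefficientwise in `t`. Since `G_μ' = G_{μ+1}`, the coefficients `c_k(μ, σ)`
(`besselProdCoeff μ σ k`) of `G_μ G_σ` satisfy `(k+1) c_{k+1}(μ, σ) = c_k(μ+1, σ) + c_k(μ, σ+1)`;
by induction on `k` this gives the Turán-type inequality `c_k(μ, μ+n+1) ≤ c_k(μ+1, μ+n)`.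
Combined with `2 c_k(μ, μ+1) = (k+2μ+2) c_k(μ+1, μ+1)`, the coefficient of `t^{k+1}` in the
difference is `((2ν-1) c_k(ν+1, ν+1) + c_k(ν+1, ν+1) - c_k(ν, ν+2)) / (k+1) ≥ 0`, and the
constant term `ν (ν+1) / Γ(ν+2)²` is positive.
-/

open Finset

noncomputable def besselCoeff (μ : ℝ) (m : ℕ) : ℝ :=
  1 / ((m.factorial : ℝ) * Real.Gamma ((m : ℝ) + μ + 1))

lemma besselCoeff_pos {μ : ℝ} (hμ : -1 < μ) (m : ℕ) : 0 < besselCoeff μ m := by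
  have := Real.Gamma_pos_of_pos (by linarith [m.cast_nonneg (α := ℝ)] : 0 < (m : ℝ) + μ + 1)
  unfold besselCoeff
  positivity

lemma succ_mul_besselCoeff_succ (μ : ℝ) (m : ℕ) :
    ((m : ℝ) + 1) * besselCoeff μ (m + 1) = besselCoeff (μ + 1) m := by
  unfold besselCoeff
  rw [Nat.factorial_succ]
  push_cast
  rw [show (m : ℝ) + 1 + μ + 1 = m + (μ + 1) + 1 by ring]
  field_simp

lemma besselCoeff_eq_mul_besselCoeff_add_one (μ : ℝ) (m : ℕ) :
    besselCoeff μ m = ((m : ℝ) + μ + 1) * besselCoeff (μ + 1) m := by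
  unfold besselCoeff
  rw [show (m : ℝ) + (μ + 1) + 1 = (m + μ + 1) + 1 by ring]
  rcases eq_or_ne ((m : ℝ) + μ + 1) 0 with h | h
  · -- `Real.Gamma 0 = 0`, so the left side is the junk value `1 / 0 = 0`
    simp [h]
  · rw [Real.Gamma_add_one h]
    field_simp

lemma besselCoeff_eq_mul_besselCoeff_succ (μ : ℝ) (m : ℕ) :
    besselCoeff μ m = ((m : ℝ) + 1) * ((m : ℝ) + μ + 1) * besselCoeff μ (m + 1) := by
  rw [besselCoeff_eq_mul_besselCoeff_add_one, ← succ_mul_besselCoeff_succ]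
  ring

noncomputable def besselProdCoeff (μ σ : ℝ) (k : ℕ) : ℝ :=
  ∑ p ∈ antidiagonal k, besselCoeff μ p.1 * besselCoeff σ p.2

lemma besselProdCoeff_zero (μ σ : ℝ) :
    besselProdCoeff μ σ 0 = besselCoeff μ 0 * besselCoeff σ 0 := by
  simp [besselProdCoeff]

lemma besselProdCoeff_comm (μ σ : ℝ) (k : ℕ) :
    besselProdCoeff μ σ k = besselProdCoeff σ μ k := by
  rw [besselProdCoeff, ← Nat.sum_antidiagonal_swap]
  simp only [besselProdCoeff, Prod.fst_swap, Prod.snd_swap, mul_comm]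

lemma besselProdCoeff_pos {μ σ : ℝ} (hμ : -1 < μ) (hσ : -1 < σ) (k : ℕ) :
    0 < besselProdCoeff μ σ k :=
  sum_pos (fun _ _ => mul_pos (besselCoeff_pos hμ _) (besselCoeff_pos hσ _)) ⟨(0, k), by simp⟩

lemma succ_mul_besselProdCoeff_succ (μ σ : ℝ) (k : ℕ) :
    ((k : ℝ) + 1) * besselProdCoeff μ σ (k + 1) =
      besselProdCoeff (μ + 1) σ k + besselProdCoeff μ (σ + 1) k := by
  have hsplit : ((k : ℝ) + 1) * besselProdCoeff μ σ (k + 1) =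
      ∑ p ∈ antidiagonal (k + 1), (p.1 : ℝ) * (besselCoeff μ p.1 * besselCoeff σ p.2) +
      ∑ p ∈ antidiagonal (k + 1), (p.2 : ℝ) * (besselCoeff μ p.1 * besselCoeff σ p.2) := by
    rw [besselProdCoeff, mul_sum, ← sum_add_distrib]
    refine sum_congr rfl fun p hp => ?_
    rw [← add_mul, ← Nat.cast_add, mem_antidiagonal.mp hp]
    push_cast
    ring
  rw [hsplit, Nat.sum_antidiagonal_succ, Nat.sum_antidiagonal_succ']
  simp only [besselProdCoeff, Nat.cast_zero, zero_mul, zero_add]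
  congr 1 <;> refine sum_congr rfl fun p _ => ?_ <;>
    (rw [← succ_mul_besselCoeff_succ]; push_cast; ring)

lemma two_mul_besselProdCoeff_add_one (μ : ℝ) (k : ℕ) :
    2 * besselProdCoeff μ (μ + 1) k =
      ((k : ℝ) + 2 * μ + 2) * besselProdCoeff (μ + 1) (μ + 1) k := by
  rw [two_mul]
  nth_rw 2 [besselProdCoeff_comm]
  simp only [besselProdCoeff, ← sum_add_distrib, mul_sum]
  refine sum_congr rfl fun p hp => ?_
  rw [besselCoeff_eq_mul_besselCoeff_add_one μ p.1, besselCoeff_eq_mul_besselCoeff_add_one μ p.2,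
    ← mem_antidiagonal.mp hp]
  push_cast
  ring

lemma besselProdCoeff_le_besselProdCoeff {μ : ℝ} (hμ : -1 < μ) (n k : ℕ) :
    besselProdCoeff μ (μ + n + 1) k ≤ besselProdCoeff (μ + 1) (μ + n) k := by
  induction k generalizing μ n with
  | zero =>
    rcases n with _ | n
    · simp [besselProdCoeff_comm μ]
    set σ := μ + ((n + 1 : ℕ) : ℝ) with hσ
    have hμσ : μ + 1 ≤ σ := by
      rw [hσ]
      push_cast
      linarith [n.cast_nonneg (α := ℝ)]
    rw [besselProdCoeff_zero, besselProdCoeff_zero, besselCoeff_eq_mul_besselCoeff_add_one μ,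
      besselCoeff_eq_mul_besselCoeff_add_one σ]
    have := mul_pos (besselCoeff_pos (by linarith : -1 < μ + 1) 0)
      (besselCoeff_pos (by linarith : -1 < σ + 1) 0)
    push_cast
    nlinarith
  | succ k ih =>
    rcases n with _ | n
    · simp [besselProdCoeff_comm μ]
    have h₁ := ih hμ (n + 2)
    have h₂ := ih (by linarith : -1 < μ + 1) n
    refine le_of_mul_le_mul_left ?_ (by positivity : (0 : ℝ) < k + 1)
    rw [succ_mul_besselProdCoeff_succ, succ_mul_besselProdCoeff_succ]
    push_cast at h₁ h₂ ⊢
    ring_nf at h₁ h₂ ⊢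
    linarith

lemma besselProdCoeff_add_one_add_besselProdCoeff_le {ν : ℝ} (hν : 1 / 2 ≤ ν) (k : ℕ) :
    besselProdCoeff ν (ν + 1) (k + 1) + besselProdCoeff (ν + 1) (ν + 1) k ≤
      besselProdCoeff ν ν (k + 1) := by
  have hdiag := succ_mul_besselProdCoeff_succ ν ν k
  rw [besselProdCoeff_comm (ν + 1) ν] at hdiag
  have hoff := succ_mul_besselProdCoeff_succ ν (ν + 1) k
  have hhalf := two_mul_besselProdCoeff_add_one ν k
  have hturan : besselProdCoeff ν (ν + 1 + 1) k ≤ besselProdCoeff (ν + 1) (ν + 1) k := by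
    simpa using besselProdCoeff_le_besselProdCoeff (by linarith : -1 < ν) 1 k
  have hpos := besselProdCoeff_pos (by linarith : -1 < ν + 1) (by linarith : -1 < ν + 1) k
  have hkey : ((k : ℝ) + 1) * (besselProdCoeff ν ν (k + 1) - besselProdCoeff ν (ν + 1) (k + 1) -
      besselProdCoeff (ν + 1) (ν + 1) k) = (2 * ν - 1) * besselProdCoeff (ν + 1) (ν + 1) k +
      (besselProdCoeff (ν + 1) (ν + 1) k - besselProdCoeff ν (ν + 1 + 1) k) := by
    linear_combination hdiag - hoff + hhalf
  have hmul : 0 ≤ ((k : ℝ) + 1) * (besselProdCoeff ν ν (k + 1) -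
      besselProdCoeff ν (ν + 1) (k + 1) - besselProdCoeff (ν + 1) (ν + 1) k) := by
    rw [hkey]
    exact add_nonneg (mul_nonneg (by linarith) hpos.le) (sub_nonneg.mpr hturan)
  linarith [nonneg_of_mul_nonneg_right hmul (by positivity : (0 : ℝ) < k + 1)]

lemma summable_besselCoeff_mul_pow {μ t : ℝ} (hμ : -1 < μ) (ht : 0 ≤ t) :
    Summable fun m => besselCoeff μ m * t ^ m := by
  refine summable_of_ratio_norm_eventually_le (r := 1 / 2) (by norm_num) ?_
  filter_upwards [eventually_ge_atTop ⌈2 * t⌉₊] with m hm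
  have hm : 2 * t ≤ m := Nat.ceil_le.mp hm
  have hμm : 0 < (m : ℝ) + μ + 1 := by linarith [m.cast_nonneg (α := ℝ)]
  have hstep : t / (((m : ℝ) + 1) * ((m : ℝ) + μ + 1)) ≤ 1 / 2 := by
    rw [div_le_iff₀ (by positivity)]
    nlinarith [m.cast_nonneg (α := ℝ)]
  have hfm : 0 ≤ besselCoeff μ m * t ^ m := mul_nonneg (besselCoeff_pos hμ m).le (pow_nonneg ht m)
  calc ‖besselCoeff μ (m + 1) * t ^ (m + 1)‖
      = besselCoeff μ m * t ^ m * (t / (((m : ℝ) + 1) * ((m : ℝ) + μ + 1))) := by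
        rw [Real.norm_of_nonneg (mul_nonneg (besselCoeff_pos hμ _).le (pow_nonneg ht _)),
          besselCoeff_eq_mul_besselCoeff_succ μ m]
        field_simp
        ring
    _ ≤ besselCoeff μ m * t ^ m * (1 / 2) := mul_le_mul_of_nonneg_left hstep hfm
    _ = 1 / 2 * ‖besselCoeff μ m * t ^ m‖ := by rw [Real.norm_of_nonneg hfm]; ring

noncomputable def besselSeries (μ t : ℝ) : ℝ :=
  ∑' m, besselCoeff μ m * t ^ m

lemma besselSeries_pos {μ t : ℝ} (hμ : -1 < μ) (ht : 0 ≤ t) : 0 < besselSeries μ t :=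
  (summable_besselCoeff_mul_pow hμ ht).tsum_pos
    (fun m => mul_nonneg (besselCoeff_pos hμ m).le (pow_nonneg ht m)) 0
    (by simpa using besselCoeff_pos hμ 0)

lemma hasSum_besselProdCoeff_mul_pow {μ σ t : ℝ} (hμ : -1 < μ) (hσ : -1 < σ) (ht : 0 ≤ t) :
    HasSum (fun k => besselProdCoeff μ σ k * t ^ k) (besselSeries μ t * besselSeries σ t) := by
  set f : ℕ → ℝ := fun m => besselCoeff μ m * t ^ m
  set g : ℕ → ℝ := fun m => besselCoeff σ m * t ^ m
  have hf : Summable f := summable_besselCoeff_mul_pow hμ ht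
  have hg : Summable g := summable_besselCoeff_mul_pow hσ ht
  have hfg : Summable fun p : ℕ × ℕ => f p.1 * g p.2 :=
    hf.mul_of_nonneg hg (fun m => mul_nonneg (besselCoeff_pos hμ m).le (pow_nonneg ht m))
      (fun m => mul_nonneg (besselCoeff_pos hσ m).le (pow_nonneg ht m))
  have hterm : ∀ k, ∑ p ∈ antidiagonal k, f p.1 * g p.2 = besselProdCoeff μ σ k * t ^ k := by
    intro k
    rw [besselProdCoeff, sum_mul]
    refine sum_congr rfl fun p hp => ?_
    rw [← mem_antidiagonal.mp hp, pow_add]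
    ring
  have hsum := (summable_sum_mul_antidiagonal_of_summable_mul hfg).hasSum
  rw [← hf.tsum_mul_tsum_eq_tsum_sum_antidiagonal hg hfg] at hsum
  simpa only [hterm, besselSeries] using hsum

lemma lt_of_hasSum_of_le_succ {a b : ℕ → ℝ} {A B : ℝ} (ha : HasSum a A) (hb : HasSum b B)
    (h₀ : 0 < a 0) (h : ∀ k, b k ≤ a (k + 1)) : B < A := by
  have ha' := (hasSum_nat_add_iff' 1).mpr ha
  simp only [range_one, sum_singleton] at ha'
  linarith [hasSum_le h hb ha']

lemma mul_sq_besselSeries_add_one_lt {ν t : ℝ} (hν : 1 / 2 ≤ ν) (ht : 0 ≤ t) :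
    t * (besselSeries (ν + 1) t * besselSeries (ν + 1) t) <
      besselSeries ν t * besselSeries ν t - besselSeries ν t * besselSeries (ν + 1) t := by
  have hν₀ : -1 < ν := by linarith
  have hν₁ : -1 < ν + 1 := by linarith
  refine lt_of_hasSum_of_le_succ
    ((hasSum_besselProdCoeff_mul_pow hν₀ hν₀ ht).sub (hasSum_besselProdCoeff_mul_pow hν₀ hν₁ ht))
    ((hasSum_besselProdCoeff_mul_pow hν₁ hν₁ ht).mul_left t) ?_ fun k => ?_
  · simp only [besselProdCoeff_zero, pow_zero, mul_one]
    rw [besselCoeff_eq_mul_besselCoeff_add_one ν 0, Nat.cast_zero, zero_add]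
    have hA := besselCoeff_pos hν₁ 0
    have := mul_pos (mul_pos (by linarith : (0 : ℝ) < ν + 1) (by linarith : (0 : ℝ) < ν))
      (mul_pos hA hA)
    linarith
  · have := mul_le_mul_of_nonneg_right (besselProdCoeff_add_one_add_besselProdCoeff_le hν k)
      (pow_nonneg ht (k + 1))
    rw [pow_succ] at *
    linarith

lemma besselI_eq_rpow_mul_besselSeries (μ : ℝ) {x : ℝ} (hx : 0 < x) :
    besselI μ x = (x / 2) ^ μ * besselSeries μ (x ^ 2 / 4) := by
  rw [besselI, besselSeries, ← tsum_mul_left]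
  refine tsum_congr fun m => ?_
  have hpow : (x / 2) ^ (2 * (m : ℝ)) = (x ^ 2 / 4) ^ m := by
    rw [rpow_mul (by positivity), rpow_two, rpow_natCast, div_pow]
    norm_num
  rw [rpow_add (by positivity), hpow, besselCoeff]
  ring

theorem stmt_14 (ν x : ℝ) (hν : 1 / 2 ≤ ν) (hx : 0 < x) :
    (psi ν x) ^ 2 + (2 / x) * psi ν x - 1 < 0 := by
  have ht : 0 ≤ x ^ 2 / 4 := by positivity
  have hpsi : psi ν x =
      x / 2 * (besselSeries (ν + 1) (x ^ 2 / 4) / besselSeries ν (x ^ 2 / 4)) := by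
    rw [psi, besselI_eq_rpow_mul_besselSeries _ hx, besselI_eq_rpow_mul_besselSeries _ hx,
      rpow_add (by positivity), rpow_one]
    field_simp
  have hineq := mul_sq_besselSeries_add_one_lt hν ht
  have hG₀ := besselSeries_pos (by linarith : -1 < ν) ht
  set G₀ := besselSeries ν (x ^ 2 / 4)
  set G₁ := besselSeries (ν + 1) (x ^ 2 / 4)
  have hquot : psi ν x ^ 2 + 2 / x * psi ν x - 1 =
      (x ^ 2 / 4 * (G₁ * G₁) - (G₀ * G₀ - G₀ * G₁)) / (G₀ * G₀) := by
    rw [hpsi]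
    field_simp
    ring
  rw [hquot]
  exact div_neg_of_neg_of_pos (sub_neg.mpr hineq) (by positivity)
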